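/- The trinomial generalized Galois numbers G_n^{(3)} = Σ_{k_1+k_2+k_3 = n} C(n; k_1,k_2,k_3)_q satisfy G_{n+1}^{(3)} = 3G_n^{(3)} + 3(q^n - 1)G_{n-1}^{(3)} + (q^n - 1)(q^{n-1} - 1)G_{n-2}^{(3)} for n ≥ 2. -/

import Mathlib

/-- `(q)_n = (1-q)(1-q^2)⋯(1-q^n)`, with `(q)_0 = 1`. -/
noncomputable def qPoch {K : Type*} [Field K] (q : K) (n : ℕ) : K :=
  ∏ j ∈ Finset.range n, (1 - q ^ (j + 1))

/-- The trinomial generalized Galois number `G_n^{(3)} = Σ_{k_1+k_2+k_3=n} C(n;k_1,k_2,k_3)_q`. -/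
noncomputable def galois3 {K : Type*} [Field K] (q : K) (n : ℕ) : K :=
  ∑ k ∈ Finset.Nat.antidiagonalTuple 3 n,
    qPoch q n / (qPoch q (k 0) * qPoch q (k 1) * qPoch q (k 2))

/-!
Write `M_n(k)` for the `q`-multinomial coefficient of a composition `k` of `n`. Lowering the
`i`-th part gives `(1 - q^{k_i + 1}) M_{n+1}(k + e_i) = (1 - q^{n+1}) M_n(k)`, so a sum over
compositions of `n + 1` weighted by `1 - q^{k_i}` drops to a sum over compositions of `n`.
Splitting `1 - q^{n+1} = (1 - q^{k_0}) + q^{k_0} (1 - q^{k_1}) + q^{k_0 + k_1} (1 - q^{k_2})` gives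
the `q`-Pascal rule `G_{n+1} = Σ_k (1 + q^{k_0} + q^{k_0 + k_1}) M_n(k)`; writing the weight as
`3 - 2 (1 - q^{k_0}) - (1 - q^{k_1}) + (1 - q^{k_0}) (1 - q^{k_1})` and lowering each term once
or twice gives the recursion.
-/

open Finset

theorem Finset.Nat.sum_antidiagonalTuple_succ_of_eq_zero {M : Type*} [AddCommMonoid M] {m : ℕ}
    (i : Fin m) (n : ℕ) (g : (Fin m → ℕ) → M) (hg : ∀ k, k i = 0 → g k = 0) :
    ∑ k ∈ Nat.antidiagonalTuple m (n + 1), g k =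
      ∑ j ∈ Nat.antidiagonalTuple m n, g (j + Pi.single i 1) := by
  rw [← sum_image (f := g) fun _ _ _ _ => add_right_cancel]
  symm
  refine sum_subset (fun k hk => ?_) fun k hk hk' => hg k ?_
  · obtain ⟨j, hj, rfl⟩ := mem_image.1 hk
    rw [Nat.mem_antidiagonalTuple] at hj ⊢
    simp [sum_add_distrib, hj]
  · by_contra hki
    refine hk' (mem_image.2 ⟨Function.update k i (k i - 1), ?_, ?_⟩)
    · rw [Nat.mem_antidiagonalTuple] at hk ⊢
      rw [sum_update_of_mem (mem_univ i)]
      rw [sum_eq_add_sum_sdiff_singleton_of_mem (mem_univ i) k] at hk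
      omega
    · ext l
      rcases eq_or_ne l i with rfl | hl
      · simp only [Pi.add_apply, Function.update_self, Pi.single_eq_same]
        omega
      · simp [hl]

section qMultinomial

variable {K : Type*} [Field K] {m : ℕ}

noncomputable def qMultinomial (q : K) (n : ℕ) (k : Fin m → ℕ) : K :=
  qPoch q n / ∏ i, qPoch q (k i)

theorem qPoch_succ (q : K) (n : ℕ) : qPoch q (n + 1) = qPoch q n * (1 - q ^ (n + 1)) :=
  prod_range_succ _ _

variable {q : K} (hq : ∀ j : ℕ, q ^ (j + 1) ≠ 1)
include hq

theorem qPoch_ne_zero (n : ℕ) : qPoch q n ≠ 0 :=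
  prod_ne_zero_iff.2 fun j _ => sub_ne_zero.2 (hq j).symm

theorem one_sub_pow_mul_qMultinomial_add_single (n : ℕ) (j : Fin m → ℕ) (i : Fin m) :
    (1 - q ^ (j i + 1)) * qMultinomial q (n + 1) (j + Pi.single i 1) =
      (1 - q ^ (n + 1)) * qMultinomial q n j := by
  have hprod : ∏ l, qPoch q ((j + Pi.single i 1 : Fin m → ℕ) l) =
      (1 - q ^ (j i + 1)) * ∏ l, qPoch q (j l) := by
    rw [← Fintype.prod_ite_eq' i (fun _ => 1 - q ^ (j i + 1)), ← prod_mul_distrib]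
    refine prod_congr rfl fun l _ => ?_
    rcases eq_or_ne i l with rfl | hl
    · simp [qPoch_succ, mul_comm]
    · simp [hl.symm]
  have hi := sub_ne_zero.2 (hq (j i)).symm
  have hP : ∏ l, qPoch q (j l) ≠ 0 := prod_ne_zero_iff.2 fun l _ => qPoch_ne_zero hq _
  rw [qMultinomial, qMultinomial, hprod, qPoch_succ]
  field_simp

theorem sum_one_sub_pow_mul_qMultinomial_succ (i : Fin m) (n : ℕ) (w : (Fin m → ℕ) → K) :
    ∑ k ∈ Nat.antidiagonalTuple m (n + 1), (1 - q ^ k i) * w k * qMultinomial q (n + 1) k =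
      (1 - q ^ (n + 1)) *
        ∑ j ∈ Nat.antidiagonalTuple m n, w (j + Pi.single i 1) * qMultinomial q n j := by
  rw [Nat.sum_antidiagonalTuple_succ_of_eq_zero i n _ fun k hk => by simp [hk], mul_sum]
  refine sum_congr rfl fun j _ => ?_
  simp only [Pi.add_apply, Pi.single_eq_same]
  linear_combination w (j + Pi.single i 1) * one_sub_pow_mul_qMultinomial_add_single hq n j i

end qMultinomial

section galois3

variable {K : Type*} [Field K]

theorem galois3_eq_sum_qMultinomial (q : K) (n : ℕ) :
    galois3 q n = ∑ k ∈ Nat.antidiagonalTuple 3 n, qMultinomial q n k := by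
  simp only [galois3, qMultinomial, Fin.prod_univ_three]

variable {q : K} (hq : ∀ j : ℕ, q ^ (j + 1) ≠ 1)
include hq

theorem galois3_succ (n : ℕ) :
    galois3 q (n + 1) =
      ∑ k ∈ Nat.antidiagonalTuple 3 n, (1 + q ^ k 0 + q ^ (k 0 + k 1)) * qMultinomial q n k := by
  refine mul_left_cancel₀ (sub_ne_zero.2 (hq n).symm) ?_
  have hsplit : ∀ k ∈ Nat.antidiagonalTuple 3 (n + 1),
      (1 - q ^ (n + 1)) * qMultinomial q (n + 1) k =
        (1 - q ^ k 0) * 1 * qMultinomial q (n + 1) k +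
          (1 - q ^ k 1) * q ^ k 0 * qMultinomial q (n + 1) k +
          (1 - q ^ k 2) * q ^ (k 0 + k 1) * qMultinomial q (n + 1) k := by
    intro k hk
    rw [Nat.mem_antidiagonalTuple, Fin.sum_univ_three] at hk
    rw [← hk]
    ring
  rw [galois3_eq_sum_qMultinomial, mul_sum, sum_congr rfl hsplit, sum_add_distrib, sum_add_distrib,
    sum_one_sub_pow_mul_qMultinomial_succ hq 0, sum_one_sub_pow_mul_qMultinomial_succ hq 1,
    sum_one_sub_pow_mul_qMultinomial_succ hq 2]
  simp only [Pi.add_apply, ne_eq, Fin.reduceEq, not_false_eq_true, Pi.single_eq_of_ne, add_zero,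
    one_mul, add_mul, sum_add_distrib]
  ring

theorem sum_one_sub_pow_mul_qMultinomial_eq_galois3 (i : Fin 3) (n : ℕ) :
    ∑ k ∈ Nat.antidiagonalTuple 3 (n + 1), (1 - q ^ k i) * qMultinomial q (n + 1) k =
      (1 - q ^ (n + 1)) * galois3 q n := by
  simpa [galois3_eq_sum_qMultinomial] using
    sum_one_sub_pow_mul_qMultinomial_succ hq i n fun _ => 1

theorem sum_one_sub_pow_mul_one_sub_pow_mul_qMultinomial_eq_galois3 (n : ℕ) :
    ∑ k ∈ Nat.antidiagonalTuple 3 (n + 2),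
        (1 - q ^ k 0) * (1 - q ^ k 1) * qMultinomial q (n + 2) k =
      (1 - q ^ (n + 2)) * ((1 - q ^ (n + 1)) * galois3 q n) := by
  rw [sum_one_sub_pow_mul_qMultinomial_succ hq 0 (n + 1) fun k => 1 - q ^ k 1,
    ← sum_one_sub_pow_mul_qMultinomial_eq_galois3 hq 1]
  simp

end galois3

theorem RatFunc.X_pow_ne_one {K : Type*} [Field K] {j : ℕ} (hj : j ≠ 0) :
    (RatFunc.X : RatFunc K) ^ j ≠ 1 := by
  intro h
  have hX : (Polynomial.X ^ j : Polynomial K) = 1 :=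
    RatFunc.algebraMap_injective K (by simpa using h)
  simpa [hj] using congrArg Polynomial.natDegree hX

/-- `G_{n+1}^{(3)} = 3G_n^{(3)} + 3(q^n-1)G_{n-1}^{(3)} + (q^n-1)(q^{n-1}-1)G_{n-2}^{(3)}`
for `n ≥ 2`. -/
theorem galois3_recursion (n : ℕ) (hn : 2 ≤ n) :
    galois3 (RatFunc.X : RatFunc ℚ) (n + 1) =
      3 * galois3 (RatFunc.X : RatFunc ℚ) n +
        3 * ((RatFunc.X : RatFunc ℚ) ^ n - 1) * galois3 (RatFunc.X : RatFunc ℚ) (n - 1) +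
        ((RatFunc.X : RatFunc ℚ) ^ n - 1) * ((RatFunc.X : RatFunc ℚ) ^ (n - 1) - 1) *
          galois3 (RatFunc.X : RatFunc ℚ) (n - 2) := by
  obtain ⟨m, rfl⟩ : ∃ m, n = m + 2 := ⟨n - 2, by omega⟩
  set q : RatFunc ℚ := RatFunc.X
  have hq : ∀ j : ℕ, q ^ (j + 1) ≠ 1 := fun j => RatFunc.X_pow_ne_one j.succ_ne_zero
  have hpascal : galois3 q (m + 3) =
      ∑ k ∈ Nat.antidiagonalTuple 3 (m + 2), (3 * qMultinomial q (m + 2) k -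
        2 * ((1 - q ^ k 0) * qMultinomial q (m + 2) k) - (1 - q ^ k 1) * qMultinomial q (m + 2) k +
        (1 - q ^ k 0) * (1 - q ^ k 1) * qMultinomial q (m + 2) k) := by
    rw [galois3_succ hq]
    exact sum_congr rfl fun k _ => by ring
  simp only [sum_add_distrib, sum_sub_distrib, ← mul_sum, ← galois3_eq_sum_qMultinomial,
    sum_one_sub_pow_mul_qMultinomial_eq_galois3 hq _ (m + 1),
    sum_one_sub_pow_mul_one_sub_pow_mul_qMultinomial_eq_galois3 hq] at hpascal
  rw [hpascal, show m + 2 - 1 = m + 1 from rfl, show m + 2 - 2 = m from rfl]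
  ring
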